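/- arXiv:2604.10868 — 2 statements merged into one kernel-verified Lean document; each statement's English description precedes it below -/
import Mathlib

section
/- Let Y be a finite set and A ∈ DCCone(Y) nonempty. Then I(A) = sup_{p_T} inf_{p_{Y|T}} I(T;Y), where the supremum is over finitely supported probability mass functions p_T on A, the infimum is over kernels p_{Y|T} assigning to each t ∈ A a distribution p_{Y|T}(·|t) ∈ Δ_Y satisfying ⟨t, p_{Y|T}(·|t)⟩ ≤ 0 for every t ∈ A (the infimum being +∞ if no such kernel exists), and I(T;Y) is the mutual information of (T,Y) with T ∼ p_T and Y given T = t distributed as p_{Y|T}(·|t). -/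
open scoped BigOperators

noncomputable section

/-- `A ⊆ ℝ^Y` is a pricing downward closed (DC) cone. -/
def IsDCCone {Y : Type*} (A : Set (Y → ℝ)) : Prop :=
  (∀ a ∈ A, ∀ γ : ℝ, 0 ≤ γ → γ • a ∈ A) ∧
  (∀ a ∈ A, ∀ b : Y → ℝ, (∀ y, 0 ≤ b y) → a - b ∈ A)

/-- Probability mass functions on a finite set `Y`. -/
def probSimplex (Y : Type*) [Fintype Y] : Set (Y → ℝ) :=
  {p | (∀ y, 0 ≤ p y) ∧ ∑ y, p y = 1}

/-- KL divergence in bits, valued in the extended reals. -/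
def KLdiv {Y : Type*} [Fintype Y] (p q : Y → ℝ) : EReal :=
  if ∀ y, q y = 0 → p y = 0 then
    (((∑ y, if p y = 0 then 0 else p y * Real.logb 2 (p y / q y)) : ℝ) : EReal)
  else ⊤

/-- Information capacity `I(A)` of a pricing DC cone `A`.  The conventions
`I(∅) = -∞` and `I(ℝ^Y) = +∞` follow from `⨆ (empty) = ⊥` and `⨅ (empty) = ⊤`. -/
def infoCap {Y : Type*} [Fintype Y] (A : Set (Y → ℝ)) : EReal :=
  ⨅ q ∈ probSimplex Y, ⨆ a ∈ A,
    ⨅ p ∈ {p ∈ probSimplex Y | ∑ y, p y * a y ≤ 0}, KLdiv p q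

/-- Finitely supported probability mass functions supported inside a set `S`. -/
def finPMFOn {α : Type*} (S : Set α) : Set (α → ℝ) :=
  {p | (∀ a, 0 ≤ p a) ∧ (Function.support p).Finite ∧
    Function.support p ⊆ S ∧ ∑ᶠ a, p a = 1}

/-- Mutual information `I(T;Y)` in bits, where `T ∼ p_T` is a finitely supported random
portfolio and `Y` given `T = t` is distributed as the kernel `k t ∈ Δ_Y`; terms with
`k t y = 0` are taken to be `0`, and `p_Y(y) = Σ_t p_T(t) k t y`. -/
def mutualInfoTY {Y : Type*} [Fintype Y]
    (pT : (Y → ℝ) → ℝ) (k : (Y → ℝ) → Y → ℝ) : ℝ :=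
  ∑ᶠ t, ∑ y,
    (if k t y = 0 then 0 else
      pT t * k t y * Real.logb 2 (k t y / (∑ᶠ s, pT s * k s y)))

/-!
Write `minDiv t q = inf {D(p‖q) | p ∈ Δ_Y, ⟨p, t⟩ ≤ 0}`, so that
`I(A) = inf_q sup_{t ∈ A} minDiv t q`, and recall the compensation identity
`∑ₜ p_T(t) D(p_{Y|T}(·|t) ‖ q) = I(T;Y) + D(p_Y ‖ q)`.

`≥`: if `sup_t minDiv t q < c`, kernels nearly optimal for each `minDiv t q` give
`I(T;Y) ≤ ∑ₜ p_T(t) D(p_{Y|T}(·|t) ‖ q) < c`, whatever `p_T` is.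

`≤`: by joint convexity of `D`, each `minDiv t` is convex, hence continuous, on the positive
orthant. On the compact convex set of distributions bounded below by `(1 - ρ)/|Y|`, the strict
cover `c < sup_t minDiv t` is realised by finitely many `t` (compactness) and then by a single
mixture, `c ≤ ∑ₜ p_T(t) minDiv t` (separate `(c, …, c)` from the upward closure of
`q ↦ (minDiv t q)ₜ`). For any admissible kernel the smoothed marginal `ρ p_Y + (1 - ρ)/|Y|` lies
in that set and costs at most `-log₂ ρ` in every divergence, so
`I(T;Y) = ∑ₜ p_T(t) D(p_{Y|T}(·|t) ‖ p_Y) ≥ c + log₂ ρ`.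
If some `t ∈ A` admits no such `p`, there is no admissible kernel and both sides are `⊤`.
-/

open Real Set
open scoped Pointwise

theorem IsCompact.exists_finset_forall_exists_lt {E α : Type*} [TopologicalSpace E]
    {K : Set E} (hK : IsCompact K) {T : Set α} {f : α → E → ℝ} {c : ℝ}
    (hf : ∀ t ∈ T, ContinuousOn (f t) K) (h : ∀ q ∈ K, ∃ t ∈ T, c < f t q) :
    ∃ F : Finset α, ↑F ⊆ T ∧ ∀ q ∈ K, ∃ t ∈ F, c < f t q := by
  choose τ hτT hτ using h
  obtain ⟨Q, hcover⟩ := hK.elim_nhdsWithin_subcover' (fun q hq => {x | c < f (τ q hq) x})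
    fun q hq => (hf _ (hτT q hq) q hq).eventually (lt_mem_nhds (hτ q hq))
  classical
  refine ⟨Q.image fun x : K => τ x x.2, ?_, fun q hq => ?_⟩
  · simp only [Finset.coe_image, image_subset_iff]
    exact fun x _ => hτT x x.2
  obtain ⟨x, hxQ, hx⟩ := mem_iUnion₂.1 (hcover hq)
  exact ⟨τ x x.2, Finset.mem_image_of_mem _ hxQ, hx⟩

theorem exists_mem_stdSimplex_forall_lt_sum_mul {ι : Type*} [Fintype ι] {S : Set (ι → ℝ)}
    (hconv : Convex ℝ S) (hclosed : IsClosed S) (hne : S.Nonempty)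
    (hup : ∀ v ∈ S, ∀ u, v ≤ u → u ∈ S) {c : ℝ} (hc : (fun _ => c) ∉ S) :
    ∃ w ∈ stdSimplex ℝ ι, ∀ v ∈ S, c < ∑ i, w i * v i := by
  classical
  obtain ⟨φ, u, hφc, hφS⟩ := geometric_hahn_banach_point_closed hconv hclosed hc
  set l : ι → ℝ := fun i => φ (Pi.single i 1)
  have hφ : ∀ v, φ v = ∑ i, v i * l i := fun v => by
    conv_lhs => rw [pi_eq_sum_univ' v]
    simp [l]
  obtain ⟨v₀, hv₀⟩ := hne
  have hl : ∀ i, 0 ≤ l i := fun i => by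
    by_contra! hi
    have hmem := hup v₀ hv₀ (v₀ + ((φ v₀ - u) / -l i) • Pi.single i 1)
      (le_add_of_nonneg_right (smul_nonneg (div_nonneg (by linarith [hφS v₀ hv₀]) (by linarith))
        (Pi.single_nonneg.2 zero_le_one)))
    have := hφS _ hmem
    rw [map_add, map_smul, smul_eq_mul, div_mul_eq_mul_div, div_neg,
      mul_div_cancel_right₀ _ hi.ne] at this
    linarith
  have hL : 0 < ∑ i, l i := by
    refine (Finset.sum_nonneg fun i _ => hl i).lt_of_ne fun h0 => ?_
    have hl0 : ∀ v, φ v = 0 := fun v => by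
      rw [hφ]
      exact Finset.sum_eq_zero fun i _ => by
        rw [(Finset.sum_eq_zero_iff_of_nonneg fun i _ => hl i).1 h0.symm i (Finset.mem_univ i),
          mul_zero]
    linarith [hl0 (fun _ => c), hl0 v₀, hφS v₀ hv₀]
  refine ⟨fun i => l i / ∑ j, l j, ⟨fun i => div_nonneg (hl i) hL.le, ?_⟩, fun v hv => ?_⟩
  · rw [← Finset.sum_div, div_self hL.ne']
  · have hcl : c * ∑ i, l i < ∑ i, l i * v i := by
      rw [hφ, ← Finset.mul_sum] at hφc
      simpa only [hφ, mul_comm] using hφc.trans (hφS v hv)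
    simpa only [div_mul_eq_mul_div, ← Finset.sum_div, lt_div_iff₀ hL] using hcl

theorem exists_mem_stdSimplex_forall_le_sum_mul {ι E : Type*} [Fintype ι]
    [AddCommGroup E] [Module ℝ E] [TopologicalSpace E]
    {K : Set E} (hKc : IsCompact K) (hK : Convex ℝ K) (hne : K.Nonempty)
    {f : ι → E → ℝ} (hf : ∀ i, ConvexOn ℝ K (f i)) (hcont : ∀ i, ContinuousOn (f i) K)
    {c : ℝ} (h : ∀ q ∈ K, ∃ i, c < f i q) :
    ∃ w ∈ stdSimplex ℝ ι, ∀ q ∈ K, c ≤ ∑ i, w i * f i q := by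
  set F : E → ι → ℝ := fun q i => f i q
  set S : Set (ι → ℝ) := F '' K + Ici 0
  have hS : ∀ v, v ∈ S ↔ ∃ q ∈ K, F q ≤ v := fun v => by
    simp only [S, mem_add, mem_image, mem_Ici]
    constructor
    · rintro ⟨_, ⟨q, hq, rfl⟩, u, hu, rfl⟩
      exact ⟨q, hq, le_add_of_nonneg_right hu⟩
    · rintro ⟨q, hq, hqv⟩
      exact ⟨F q, ⟨q, hq, rfl⟩, v - F q, sub_nonneg.2 hqv, add_sub_cancel _ _⟩
  have hSconv : Convex ℝ S := by
    intro v₁ hv₁ v₂ hv₂ a b ha hb hab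
    obtain ⟨q₁, hq₁, h₁⟩ := (hS v₁).1 hv₁
    obtain ⟨q₂, hq₂, h₂⟩ := (hS v₂).1 hv₂
    refine (hS _).2 ⟨a • q₁ + b • q₂, hK hq₁ hq₂ ha hb hab, fun i => ?_⟩
    calc F (a • q₁ + b • q₂) i ≤ a * F q₁ i + b * F q₂ i := (hf i).2 hq₁ hq₂ ha hb hab
      _ ≤ a * v₁ i + b * v₂ i := by gcongr; exacts [h₁ i, h₂ i]
  have hSclosed : IsClosed S :=
    isClosed_Ici.add_left_of_isCompact (hKc.image_of_continuousOn (continuousOn_pi.2 hcont))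
  have hcS : (fun _ => c) ∉ S := fun hc => by
    obtain ⟨q, hq, hqc⟩ := (hS _).1 hc
    obtain ⟨i, hi⟩ := h q hq
    exact (hqc i).not_gt hi
  obtain ⟨q₀, hq₀⟩ := hne
  obtain ⟨w, hw, hwS⟩ := exists_mem_stdSimplex_forall_lt_sum_mul hSconv hSclosed
    ⟨F q₀, (hS _).2 ⟨q₀, hq₀, le_rfl⟩⟩
    (fun v hv u hvu => by
      obtain ⟨q, hq, hqv⟩ := (hS v).1 hv
      exact (hS u).2 ⟨q, hq, hqv.trans hvu⟩) hcS
  exact ⟨w, hw, fun q hq => (hwS _ ((hS _).2 ⟨q, hq, le_rfl⟩)).le⟩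

theorem mul_le_sum_mul_of_mem {ι β : Type*} {s : Finset ι} {w : ι → ℝ} {k : ι → β → ℝ}
    (hw : ∀ t ∈ s, 0 ≤ w t) (hk : ∀ t ∈ s, ∀ y, 0 ≤ k t y) {t : ι}
    (ht : t ∈ s) (y : β) : w t * k t y ≤ ∑ t ∈ s, w t * k t y :=
  Finset.single_le_sum (f := fun t => w t * k t y)
    (fun t ht => mul_nonneg (hw t ht) (hk t ht y)) ht

theorem div_log_two_sub_le_mul_logb_div {a b : ℝ} (ha : 0 ≤ a) (hb : 0 ≤ b)
    (hab : b = 0 → a = 0) :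
    (a - b) / log 2 ≤ a * logb 2 (a / b) := by
  rcases ha.eq_or_lt with rfl | ha
  · rw [zero_sub, zero_mul, neg_div]
    exact neg_nonpos.2 (div_nonneg hb (log_nonneg one_le_two))
  have hb : 0 < b := hb.lt_of_ne fun h => ha.ne' (hab h.symm)
  have h := mul_le_mul_of_nonneg_left (one_sub_inv_le_log_of_pos (div_pos ha hb)) ha.le
  rw [inv_div, mul_sub, mul_one, mul_div_cancel₀ _ ha.ne'] at h
  rw [logb, ← mul_div_assoc]
  exact div_le_div_of_nonneg_right h (log_nonneg one_le_two)

theorem add_mul_logb_div_add_le {a₁ a₂ b₁ b₂ : ℝ} (ha₁ : 0 ≤ a₁) (ha₂ : 0 ≤ a₂)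
    (hb₁ : 0 < b₁) (hb₂ : 0 < b₂) :
    (a₁ + a₂) * logb 2 ((a₁ + a₂) / (b₁ + b₂))
      ≤ a₁ * logb 2 (a₁ / b₁) + a₂ * logb 2 (a₂ / b₂) := by
  have hB : 0 < b₁ + b₂ := add_pos hb₁ hb₂
  -- convexity of `x ↦ x log x` at `a₁ / b₁` and `a₂ / b₂` with weights `bᵢ / (b₁ + b₂)`
  have h := convexOn_mul_log.2 (x := a₁ / b₁) (y := a₂ / b₂) (div_nonneg ha₁ hb₁.le)
    (div_nonneg ha₂ hb₂.le) (div_nonneg hb₁.le hB.le) (div_nonneg hb₂.le hB.le)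
    (by field_simp)
  simp only [smul_eq_mul] at h
  have e : b₁ / (b₁ + b₂) * (a₁ / b₁) + b₂ / (b₁ + b₂) * (a₂ / b₂) = (a₁ + a₂) / (b₁ + b₂) := by
    field_simp
  rw [e] at h
  simp only [logb, ← mul_div_assoc, ← add_div]
  refine div_le_div_of_nonneg_right ?_ (log_nonneg one_le_two)
  calc (a₁ + a₂) * log ((a₁ + a₂) / (b₁ + b₂))
      = (b₁ + b₂) * ((a₁ + a₂) / (b₁ + b₂) * log ((a₁ + a₂) / (b₁ + b₂))) := by field_simp
    _ ≤ (b₁ + b₂) * (b₁ / (b₁ + b₂) * (a₁ / b₁ * log (a₁ / b₁))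
          + b₂ / (b₁ + b₂) * (a₂ / b₂ * log (a₂ / b₂))) := mul_le_mul_of_nonneg_left h hB.le
    _ = a₁ * log (a₁ / b₁) + a₂ * log (a₂ / b₂) := by field_simp

theorem mem_finPMFOn_of_support_subset {α : Type*} {S : Set α} {p : α → ℝ} {s : Finset α}
    (hp : ∀ a, 0 ≤ p a) (hps : Function.support p ⊆ s) (hsS : ↑s ⊆ S)
    (hp1 : ∑ a ∈ s, p a = 1) : p ∈ finPMFOn S :=
  ⟨hp, s.finite_toSet.subset hps, hps.trans hsS, by rwa [finsum_eq_sum_of_support_subset p hps]⟩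

theorem exists_finset_of_mem_finPMFOn {α : Type*} {S : Set α} {p : α → ℝ} (hp : p ∈ finPMFOn S) :
    ∃ s : Finset α, ↑s ⊆ S ∧ Function.support p ⊆ s ∧ ∑ a ∈ s, p a = 1 := by
  obtain ⟨-, hfin, hS, h1⟩ := hp
  refine ⟨hfin.toFinset, by simpa using hS, by simp, ?_⟩
  rwa [← finsum_eq_sum_of_support_subset p (by simp)]

theorem finsum_mul_eq_sum {α : Type*} {p f : α → ℝ} {s : Finset α}
    (hs : Function.support p ⊆ s) : ∑ᶠ a, p a * f a = ∑ a ∈ s, p a * f a :=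
  finsum_eq_sum_of_support_subset _ ((Function.support_mul_subset_left _ _).trans hs)

theorem exists_finPMFOn_forall_le_sum_mul {β E : Type*} [AddCommGroup E] [Module ℝ E]
    [TopologicalSpace E] {K : Set E} (hKc : IsCompact K) (hK : Convex ℝ K) (hne : K.Nonempty)
    {T : Set β} {f : β → E → ℝ} (hf : ∀ t ∈ T, ConvexOn ℝ K (f t))
    (hcont : ∀ t ∈ T, ContinuousOn (f t) K) {c : ℝ} (h : ∀ q ∈ K, ∃ t ∈ T, c < f t q) :
    ∃ F : Finset β, ↑F ⊆ T ∧ ∃ w ∈ finPMFOn T,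
      Function.support w ⊆ F ∧ ∀ q ∈ K, c ≤ ∑ t ∈ F, w t * f t q := by
  classical
  obtain ⟨F, hFT, hF⟩ := hKc.exists_finset_forall_exists_lt hcont h
  obtain ⟨v, hv, hvK⟩ := exists_mem_stdSimplex_forall_le_sum_mul (ι := F) hKc hK hne
    (fun t => hf t (hFT t.2)) (fun t => hcont t (hFT t.2))
    fun q hq => let ⟨t, htF, ht⟩ := hF q hq; ⟨⟨t, htF⟩, ht⟩
  set w : β → ℝ := fun t => if ht : t ∈ F then v ⟨t, ht⟩ else 0
  have hw : ∀ g : β → ℝ, ∑ t ∈ F, w t * g t = ∑ t : F, v t * g t := fun g => by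
    rw [← Finset.sum_coe_sort F]
    simp [w]
  have hwF : Function.support w ⊆ F := fun t ht => by
    by_contra h
    exact ht (dif_neg h)
  refine ⟨F, hFT, w, mem_finPMFOn_of_support_subset (fun t => ?_) hwF hFT ?_, hwF, fun q hq => ?_⟩
  · by_cases ht : t ∈ F <;> simp [w, ht, hv.1]
  · simpa using (hw 1).trans (by simpa using hv.2)
  · rw [hw]
    exact hvK q hq

section

variable {Y : Type*} [Fintype Y]

def klSum (p q : Y → ℝ) : ℝ := ∑ y, p y * logb 2 (p y / q y)

theorem KLdiv_eq_klSum {p q : Y → ℝ} (h : ∀ y, q y = 0 → p y = 0) :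
    KLdiv p q = (klSum p q : EReal) := by
  rw [KLdiv, if_pos h, klSum, EReal.coe_eq_coe_iff]
  exact Finset.sum_congr rfl fun y _ => by split_ifs with hp <;> simp [hp]

theorem div_log_two_sub_le_klSum {p q : Y → ℝ} (hp : ∀ y, 0 ≤ p y) (hq : ∀ y, 0 ≤ q y)
    (hpq : ∀ y, q y = 0 → p y = 0) :
    ((∑ y, p y) - ∑ y, q y) / log 2 ≤ klSum p q := by
  rw [← Finset.sum_sub_distrib, Finset.sum_div]
  exact Finset.sum_le_sum fun y _ => div_log_two_sub_le_mul_logb_div (hp y) (hq y) (hpq y)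

theorem klSum_nonneg {p q : Y → ℝ} (hp : p ∈ probSimplex Y) (hq : q ∈ probSimplex Y)
    (hpq : ∀ y, q y = 0 → p y = 0) : 0 ≤ klSum p q := by
  simpa [hp.2, hq.2] using div_log_two_sub_le_klSum hp.1 hq.1 hpq

theorem klSum_le_sub_mul_logb {p q q' : Y → ℝ} {c : ℝ} (hp : ∀ y, 0 ≤ p y) (hq : ∀ y, 0 ≤ q y)
    (hpq : ∀ y, q y = 0 → p y = 0) (hc : 0 < c) (hcq : ∀ y, c * q y ≤ q' y) :
    klSum p q' ≤ klSum p q - (∑ y, p y) * logb 2 c := by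
  rw [klSum, klSum, Finset.sum_mul, ← Finset.sum_sub_distrib]
  refine Finset.sum_le_sum fun y _ => ?_
  rcases (hp y).eq_or_lt with h0 | h0
  · simp [← h0]
  have hqy : 0 < q y := (hq y).lt_of_ne fun h => h0.ne (hpq y h.symm).symm
  have hle : logb 2 (p y / q' y) ≤ logb 2 (p y / q y) - logb 2 c := by
    rw [← logb_div (div_pos h0 hqy).ne' hc.ne', div_div, mul_comm]
    exact logb_le_logb_of_le one_lt_two (div_pos h0 (lt_of_lt_of_le (mul_pos hc hqy) (hcq y)))
      (div_le_div_of_nonneg_left h0.le (mul_pos hc hqy) (hcq y))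
  nlinarith

theorem klSum_smul_add_smul_le {p₁ p₂ q₁ q₂ : Y → ℝ} {a b : ℝ} (ha : 0 < a) (hb : 0 < b)
    (hp₁ : ∀ y, 0 ≤ p₁ y) (hp₂ : ∀ y, 0 ≤ p₂ y) (hq₁ : ∀ y, 0 < q₁ y) (hq₂ : ∀ y, 0 < q₂ y) :
    klSum (a • p₁ + b • p₂) (a • q₁ + b • q₂) ≤ a * klSum p₁ q₁ + b * klSum p₂ q₂ := by
  rw [klSum, klSum, klSum, Finset.mul_sum, Finset.mul_sum, ← Finset.sum_add_distrib]
  refine Finset.sum_le_sum fun y _ => ?_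
  have h := add_mul_logb_div_add_le (mul_nonneg ha.le (hp₁ y)) (mul_nonneg hb.le (hp₂ y))
    (mul_pos ha (hq₁ y)) (mul_pos hb (hq₂ y))
  rw [mul_div_mul_left _ _ ha.ne', mul_div_mul_left _ _ hb.ne', mul_assoc, mul_assoc] at h
  simpa using h

section Mixture

variable {α : Type*} {s : Finset α} {w : α → ℝ} {k : α → Y → ℝ}

theorem mixture_mem_probSimplex (hw : ∀ t ∈ s, 0 ≤ w t) (hw1 : ∑ t ∈ s, w t = 1)
    (hk : ∀ t ∈ s, k t ∈ probSimplex Y) :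
    (fun y => ∑ t ∈ s, w t * k t y) ∈ probSimplex Y := by
  refine ⟨fun y => Finset.sum_nonneg fun t ht => mul_nonneg (hw t ht) ((hk t ht).1 y), ?_⟩
  rw [Finset.sum_comm]
  simp only [← Finset.mul_sum]
  rw [Finset.sum_congr rfl fun t ht => by rw [(hk t ht).2, mul_one], hw1]

theorem sum_mul_klSum_mixture (hw : ∀ t ∈ s, 0 ≤ w t) (hk : ∀ t ∈ s, ∀ y, 0 ≤ k t y)
    {q : Y → ℝ} (hq : ∀ y, q y = 0 → ∑ t ∈ s, w t * k t y = 0) :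
    ∑ t ∈ s, w t * klSum (k t) (fun y => ∑ t ∈ s, w t * k t y)
      = ∑ t ∈ s, w t * klSum (k t) q - klSum (fun y => ∑ t ∈ s, w t * k t y) q := by
  set m : Y → ℝ := fun y => ∑ t ∈ s, w t * k t y
  have hmq : klSum m q = ∑ t ∈ s, ∑ y, w t * (k t y * logb 2 (m y / q y)) := by
    rw [klSum, Finset.sum_comm]
    simp only [m, Finset.sum_mul, mul_assoc]
  rw [hmq, ← Finset.sum_sub_distrib]
  refine Finset.sum_congr rfl fun t ht => ?_
  rw [klSum, klSum, Finset.mul_sum, Finset.mul_sum, ← Finset.sum_sub_distrib]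
  refine Finset.sum_congr rfl fun y _ => ?_
  by_cases h : w t * k t y = 0
  · simp [← mul_assoc, h]
  have hm : m y ≠ 0 :=
    ((lt_of_le_of_ne (mul_nonneg (hw t ht) (hk t ht y)) (Ne.symm h)).trans_le
      (mul_le_sum_mul_of_mem hw hk ht y)).ne'
  have hqy : q y ≠ 0 := fun h0 => hm (hq y h0)
  have hky : k t y ≠ 0 := right_ne_zero_of_mul h
  rw [logb_div hky hm, logb_div hky hqy, logb_div hm hqy]
  ring

theorem sum_mul_klSum_mixture_le (hw : ∀ t ∈ s, 0 ≤ w t) (hw1 : ∑ t ∈ s, w t = 1)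
    (hk : ∀ t ∈ s, k t ∈ probSimplex Y) {q : Y → ℝ} (hq : q ∈ probSimplex Y)
    (hkq : ∀ t ∈ s, ∀ y, q y = 0 → k t y = 0) :
    ∑ t ∈ s, w t * klSum (k t) (fun y => ∑ t ∈ s, w t * k t y)
      ≤ ∑ t ∈ s, w t * klSum (k t) q := by
  have hmq : ∀ y, q y = 0 → ∑ t ∈ s, w t * k t y = 0 := fun y hy =>
    Finset.sum_eq_zero fun t ht => by rw [hkq t ht y hy, mul_zero]
  rw [sum_mul_klSum_mixture hw (fun t ht => (hk t ht).1) hmq, sub_le_self_iff]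
  exact klSum_nonneg (mixture_mem_probSimplex hw hw1 hk) hq hmq

end Mixture

def nonposSimplex (t : Y → ℝ) : Set (Y → ℝ) := {p ∈ probSimplex Y | ∑ y, p y * t y ≤ 0}

theorem convex_nonposSimplex (t : Y → ℝ) : Convex ℝ (nonposSimplex t) :=
  (convex_stdSimplex ℝ Y).inter <| convex_halfSpace_le (f := fun p : Y → ℝ => ∑ y, p y * t y)
    ⟨fun p₁ p₂ => by simp only [Pi.add_apply, add_mul, Finset.sum_add_distrib],
      fun a p => by simp only [Pi.smul_apply, smul_eq_mul, Finset.mul_sum, mul_assoc]⟩ 0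

def minDiv (t q : Y → ℝ) : ℝ := ⨅ p : nonposSimplex t, klSum (p : Y → ℝ) q

section MinDiv

variable {t q : Y → ℝ}

theorem bddBelow_klSum_nonposSimplex (hq : ∀ y, 0 < q y) :
    BddBelow (range fun p : nonposSimplex t => klSum (p : Y → ℝ) q) := by
  refine ⟨(1 - ∑ y, q y) / log 2, ?_⟩
  rintro _ ⟨⟨p, hp⟩, rfl⟩
  simpa [hp.1.2] using
    div_log_two_sub_le_klSum hp.1.1 (fun y => (hq y).le) fun y hy => absurd hy (hq y).ne'

theorem minDiv_le_klSum {p : Y → ℝ} (hp : p ∈ nonposSimplex t) (hq : ∀ y, 0 < q y) :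
    minDiv t q ≤ klSum p q :=
  ciInf_le (bddBelow_klSum_nonposSimplex hq) ⟨p, hp⟩

theorem coe_minDiv (ht : (nonposSimplex t).Nonempty) (hq : ∀ y, 0 < q y) :
    (minDiv t q : EReal) = ⨅ p ∈ nonposSimplex t, KLdiv p q := by
  have : Nonempty (nonposSimplex t) := ht.to_subtype
  rw [minDiv, Monotone.map_ciInf_of_continuousAt continuous_coe_real_ereal.continuousAt
    EReal.coe_strictMono.monotone (bddBelow_klSum_nonposSimplex hq),
    iInf_subtype']
  exact iInf_congr fun p => (KLdiv_eq_klSum fun y hy => absurd hy (hq y).ne').symm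

theorem convexOn_minDiv (ht : (nonposSimplex t).Nonempty) :
    ConvexOn ℝ (univ.pi fun _ => Ioi 0) (minDiv t) := by
  have : Nonempty (nonposSimplex t) := ht.to_subtype
  refine convexOn_iff_forall_pos.2 ⟨convex_pi fun _ _ => convex_Ioi 0,
    fun q₁ hq₁ q₂ hq₂ a b ha hb hab => ?_⟩
  simp only [mem_univ_pi, mem_Ioi] at hq₁ hq₂
  calc minDiv t (a • q₁ + b • q₂)
      ≤ (⨅ p : nonposSimplex t, a * klSum p q₁) + ⨅ p : nonposSimplex t, b * klSum p q₂ :=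
        le_ciInf_add_ciInf fun p₁ p₂ =>
          (minDiv_le_klSum (convex_nonposSimplex t p₁.2 p₂.2 ha.le hb.le hab) fun y => by
            simpa using add_pos (mul_pos ha (hq₁ y)) (mul_pos hb (hq₂ y))).trans
          (klSum_smul_add_smul_le ha hb p₁.2.1.1 p₂.2.1.1 hq₁ hq₂)
    _ = a • minDiv t q₁ + b • minDiv t q₂ := by
        simp only [minDiv, smul_eq_mul, Real.mul_iInf_of_nonneg ha.le,
          Real.mul_iInf_of_nonneg hb.le]

theorem continuousOn_minDiv (ht : (nonposSimplex t).Nonempty) :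
    ContinuousOn (minDiv t) (univ.pi fun _ : Y => Ioi 0) :=
  (convexOn_minDiv ht).continuousOn (isOpen_set_pi finite_univ fun _ _ => isOpen_Ioi)

end MinDiv

theorem mutualInfoTY_eq_sum {pT : (Y → ℝ) → ℝ} {k : (Y → ℝ) → Y → ℝ} {s : Finset (Y → ℝ)}
    (hs : Function.support pT ⊆ s) :
    mutualInfoTY pT k = ∑ t ∈ s, pT t * klSum (k t) fun y => ∑ t ∈ s, pT t * k t y := by
  simp only [mutualInfoTY, finsum_mul_eq_sum hs]
  rw [← finsum_mul_eq_sum hs]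
  refine finsum_congr fun t => ?_
  rw [klSum, Finset.mul_sum]
  exact Finset.sum_congr rfl fun y _ => by split_ifs with h <;> simp [h, mul_assoc]

def admissibleKernels (A : Set (Y → ℝ)) : Set ((Y → ℝ) → Y → ℝ) :=
  {k | ∀ t ∈ A, k t ∈ nonposSimplex t}

def minimaxValue (A : Set (Y → ℝ)) : EReal :=
  ⨆ pT ∈ finPMFOn A, ⨅ k ∈ admissibleKernels A, ((mutualInfoTY pT k : ℝ) : EReal)

theorem KLdiv_lt_coe_iff {p q : Y → ℝ} {c : ℝ} :
    KLdiv p q < c ↔ (∀ y, q y = 0 → p y = 0) ∧ klSum p q < c := by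
  by_cases h : ∀ y, q y = 0 → p y = 0
  · rw [KLdiv_eq_klSum h, EReal.coe_lt_coe_iff]
    exact ⟨fun hc => ⟨h, hc⟩, And.right⟩
  · simp [KLdiv, h]

theorem minimaxValue_le_infoCap (A : Set (Y → ℝ)) : minimaxValue A ≤ infoCap A := by
  refine iSup₂_le fun pT hpT => EReal.le_of_forall_lt_iff_le.1 fun c hc => ?_
  obtain ⟨q, hq, hqc⟩ : ∃ q ∈ probSimplex Y, ⨆ t ∈ A, ⨅ p ∈ nonposSimplex t, KLdiv p q < c := by
    simp only [infoCap, iInf_lt_iff, exists_prop] at hc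
    exact hc
  have hk : ∀ t ∈ A, ∃ p ∈ nonposSimplex t, KLdiv p q < c := fun t ht => by
    simpa only [iInf_lt_iff, exists_prop] using
      (le_iSup₂ (f := fun t _ => ⨅ p ∈ nonposSimplex t, KLdiv p q) t ht).trans_lt hqc
  choose! k hkA hkc using hk
  simp only [KLdiv_lt_coe_iff] at hkc
  obtain ⟨s, hsA, hs, hs1⟩ := exists_finset_of_mem_finPMFOn hpT
  refine (iInf₂_le k hkA).trans ?_
  rw [mutualInfoTY_eq_sum hs, EReal.coe_le_coe_iff]
  calc _ ≤ ∑ t ∈ s, pT t * klSum (k t) q :=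
        sum_mul_klSum_mixture_le (fun t _ => hpT.1 t) hs1 (fun t ht => (hkA t (hsA ht)).1) hq
          fun t ht => (hkc t (hsA ht)).1
    _ ≤ ∑ t ∈ s, pT t * c := Finset.sum_le_sum fun t ht =>
        mul_le_mul_of_nonneg_left (hkc t (hsA ht)).2.le (hpT.1 t)
    _ = c := by rw [← Finset.sum_mul, hs1, one_mul]

def mixUniform (ρ : ℝ) (q : Y → ℝ) : Y → ℝ := fun y => ρ * q y + (1 - ρ) / Fintype.card Y

theorem mixUniform_mem [Nonempty Y] {ρ : ℝ} (hρ0 : 0 ≤ ρ) (hρ1 : ρ ≤ 1) {q : Y → ℝ}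
    (hq : q ∈ probSimplex Y) :
    mixUniform ρ q ∈ probSimplex Y ∩ univ.pi fun _ => Ici ((1 - ρ) / Fintype.card Y) := by
  have hle : ∀ y, (1 - ρ) / Fintype.card Y ≤ mixUniform ρ q y := fun y =>
    le_add_of_nonneg_left (mul_nonneg hρ0 (hq.1 y))
  refine ⟨⟨fun y => (div_nonneg (sub_nonneg.2 hρ1) (Nat.cast_nonneg _)).trans (hle y), ?_⟩,
    fun y _ => hle y⟩
  simp only [mixUniform, Finset.sum_add_distrib, ← Finset.mul_sum, hq.2, Finset.sum_const,
    Finset.card_univ, nsmul_eq_mul]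
  field_simp
  ring

theorem sum_mul_minDiv_mixUniform_add_logb_le [Nonempty Y] {s : Finset (Y → ℝ)}
    {w : (Y → ℝ) → ℝ} {k : (Y → ℝ) → Y → ℝ} (hw : ∀ t ∈ s, 0 ≤ w t) (hw1 : ∑ t ∈ s, w t = 1)
    (hk : ∀ t ∈ s, k t ∈ nonposSimplex t) {ρ : ℝ} (hρ0 : 0 < ρ) (hρ1 : ρ < 1) :
    ∑ t ∈ s, w t * minDiv t (mixUniform ρ fun y => ∑ t ∈ s, w t * k t y) + logb 2 ρ
      ≤ ∑ t ∈ s, w t * klSum (k t) fun y => ∑ t ∈ s, w t * k t y := by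
  set m : Y → ℝ := fun y => ∑ t ∈ s, w t * k t y
  have hk0 : ∀ t ∈ s, ∀ y, 0 ≤ k t y := fun t ht => (hk t ht).1.1
  have hm0 : ∀ y, 0 ≤ m y := fun y =>
    Finset.sum_nonneg fun t ht => mul_nonneg (hw t ht) (hk0 t ht y)
  have hmix : ∀ y, 0 < mixUniform ρ m y := fun y =>
    add_pos_of_nonneg_of_pos (mul_nonneg hρ0.le (hm0 y))
      (div_pos (sub_pos.2 hρ1) (Nat.cast_pos.2 Fintype.card_pos))
  rw [← mul_one (logb 2 ρ), ← hw1, Finset.mul_sum, ← Finset.sum_add_distrib]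
  refine Finset.sum_le_sum fun t ht => ?_
  rcases (hw t ht).eq_or_lt with h0 | h0
  · simp [← h0]
  have hkm : ∀ y, m y = 0 → k t y = 0 := fun y hy =>
    (mul_eq_zero.1 (le_antisymm ((mul_le_sum_mul_of_mem hw hk0 ht y).trans hy.le)
      (mul_nonneg h0.le (hk0 t ht y)))).resolve_left h0.ne'
  have hsmooth := klSum_le_sub_mul_logb (hk0 t ht) hm0 hkm hρ0
    (q' := mixUniform ρ m) fun y => le_add_of_nonneg_right
      (div_nonneg (sub_pos.2 hρ1).le (Nat.cast_nonneg _))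
  rw [(hk t ht).1.2, one_mul] at hsmooth
  rw [mul_comm (logb 2 ρ), ← mul_add]
  exact mul_le_mul_of_nonneg_left (by linarith [minDiv_le_klSum (hk t ht) hmix]) h0.le

theorem le_minimaxValue_of_lt_infoCap [Nonempty Y] {A : Set (Y → ℝ)}
    (hA : ∀ t ∈ A, (nonposSimplex t).Nonempty) {c ρ : ℝ} (hc : (c : EReal) < infoCap A)
    (hρ0 : 0 < ρ) (hρ1 : ρ < 1) : ((c + logb 2 ρ : ℝ) : EReal) ≤ minimaxValue A := by
  set K := probSimplex Y ∩ univ.pi fun _ => Ici ((1 - ρ) / Fintype.card Y)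
  have hKc : IsCompact K :=
    (isCompact_stdSimplex ℝ Y).inter_right (isClosed_set_pi fun _ _ => isClosed_Ici)
  have hK : Convex ℝ K := (convex_stdSimplex ℝ Y).inter (convex_pi fun _ _ => convex_Ici _)
  have hKpos : K ⊆ univ.pi fun _ => Ioi 0 := fun q hq y _ =>
    (div_pos (sub_pos.2 hρ1) (Nat.cast_pos.2 Fintype.card_pos)).trans_le (hq.2 y trivial)
  have hcover : ∀ q ∈ K, ∃ t ∈ A, c < minDiv t q := fun q hq => by
    have := hc.trans_le (iInf₂_le q hq.1)
    simp only [lt_iSup_iff, exists_prop] at this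
    obtain ⟨t, ht, hct⟩ := this
    refine ⟨t, ht, EReal.coe_lt_coe_iff.1 ?_⟩
    rwa [coe_minDiv (hA t ht) fun y => hKpos hq y trivial]
  obtain ⟨F, hFA, w, hw, hwF, hwK⟩ := exists_finPMFOn_forall_le_sum_mul hKc hK
    ⟨_, mixUniform_mem hρ0.le hρ1.le (stdSimplex.barycenter : stdSimplex ℝ Y).2⟩
    (fun t ht => (convexOn_minDiv (hA t ht)).subset hKpos hK)
    (fun t ht => (continuousOn_minDiv (hA t ht)).mono hKpos) hcover
  refine le_iSup₂_of_le w hw (le_iInf₂ fun k hk => ?_)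
  have hw1 : ∑ t ∈ F, w t = 1 := by rw [← finsum_eq_sum_of_support_subset w hwF, hw.2.2.2]
  have hkF : ∀ t ∈ F, k t ∈ nonposSimplex t := fun t ht => hk t (hFA ht)
  have hcw := hwK _ (mixUniform_mem hρ0.le hρ1.le
    (mixture_mem_probSimplex (fun t _ => hw.1 t) hw1 fun t ht => (hkF t ht).1))
  rw [mutualInfoTY_eq_sum hwF, EReal.coe_le_coe_iff]
  linarith [sum_mul_minDiv_mixUniform_add_logb_le (fun t _ => hw.1 t) hw1 hkF hρ0 hρ1]

theorem infoCap_le_minimaxValue {A : Set (Y → ℝ)} (hne : A.Nonempty)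
    (hA : ∀ t ∈ A, (nonposSimplex t).Nonempty) : infoCap A ≤ minimaxValue A := by
  obtain ⟨p, hp⟩ := hA _ hne.some_mem
  have : Nonempty Y := by
    by_contra hY
    simpa [not_nonempty_iff.1 hY] using hp.1.2
  refine EReal.ge_of_forall_gt_iff_ge.1 fun z hz => ?_
  obtain ⟨c, hzc, hc⟩ := EReal.lt_iff_exists_real_btwn.1 hz
  -- `ρ = 2 ^ (z - c)` makes the smoothing loss `logb 2 ρ` exactly `z - c`
  have hρ := le_minimaxValue_of_lt_infoCap hA hc (rpow_pos_of_pos two_pos (z - c))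
    (rpow_lt_one_of_one_lt_of_neg one_lt_two (sub_neg.2 (EReal.coe_lt_coe_iff.1 hzc)))
  rwa [logb_rpow two_pos (by norm_num), add_sub_cancel] at hρ

theorem minimaxValue_eq_top {A : Set (Y → ℝ)} {t : Y → ℝ} (ht : t ∈ A)
    (he : nonposSimplex t = ∅) : minimaxValue A = ⊤ := by
  classical
  have hK : admissibleKernels A = ∅ :=
    eq_empty_of_forall_notMem fun k hk => by simpa [he] using hk t ht
  have hδ : Pi.single t 1 ∈ finPMFOn A :=
    mem_finPMFOn_of_support_subset (s := {t})
      (Pi.single_nonneg.2 zero_le_one : (0 : (Y → ℝ) → ℝ) ≤ Pi.single t 1) (by simp)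
      (by simpa using ht) (by simp)
  exact top_unique (le_iSup₂_of_le _ hδ (by simp [hK]))

end

theorem infoCap_eq_minimax_general {Y : Type*} [Fintype Y]
    (A : Set (Y → ℝ)) (hne : A.Nonempty) :
    infoCap A
      = ⨆ pT ∈ finPMFOn A,
          ⨅ k ∈ {k : (Y → ℝ) → Y → ℝ |
              ∀ t ∈ A, k t ∈ probSimplex Y ∧ ∑ y, k t y * t y ≤ 0},
            ((mutualInfoTY pT k : ℝ) : EReal) := by
  change infoCap A = minimaxValue A
  refine le_antisymm ?_ (minimaxValue_le_infoCap A)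
  by_cases hA : ∀ t ∈ A, (nonposSimplex t).Nonempty
  · exact infoCap_le_minimaxValue hne hA
  · simp only [not_forall, not_nonempty_iff_eq_empty] at hA
    obtain ⟨t, ht, he⟩ := hA
    exact (minimaxValue_eq_top ht he).symm ▸ le_top

/-- Alternative characterization of the information capacity:
`I(A) = sup_{p_T} inf_{p_{Y|T}} I(T;Y)`, where `p_T` ranges over finitely supported pmfs
on `A`, and `p_{Y|T}` ranges over kernels with `p_{Y|T}(·|t) ∈ Δ_Y` and
`⟨t, p_{Y|T}(·|t)⟩ ≤ 0` for every `t ∈ A` (the infimum over an empty collection being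
`+∞`). -/
theorem infoCap_eq_minimax {Y : Type*} [Fintype Y]
    (A : Set (Y → ℝ)) (hA : IsDCCone A) (hne : A.Nonempty) :
    infoCap A
      = ⨆ pT ∈ finPMFOn A,
          ⨅ k ∈ {k : (Y → ℝ) → Y → ℝ |
              ∀ t ∈ A, k t ∈ probSimplex Y ∧ ∑ y, k t y * t y ≤ 0},
            ((mutualInfoTY pT k : ℝ) : EReal) :=
  infoCap_eq_minimax_general A hne

end
end

section
/- Let Y be a set and p ∈ Δ_Y. Then the halfspace DC cone is self-dual: (p°)□ = p°. -/
open scoped BigOperators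

noncomputable section

/-- Finitely supported probability mass functions on a set `Y`. -/
def finPMF (Y : Type*) : Set (Y → ℝ) :=
  {p | (∀ y, 0 ≤ p y) ∧ (Function.support p).Finite ∧ ∑ᶠ y, p y = 1}

/-- The pairing `⟨p, a⟩ = Σ_{y ∈ supp p} p(y) a(y)` (a finite sum since `p` is finitely
supported). -/
def pairing {Y : Type*} (p a : Y → ℝ) : ℝ := ∑ᶠ y, p y * a y

/-- The halfspace DC cone `p° = {a : ⟨p, a⟩ ≤ 0}` of a pmf `p`. -/
def halfspaceCone {Y : Type*} (p : Y → ℝ) : Set (Y → ℝ) :=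
  {a | pairing p a ≤ 0}

/-- Dual DC cone `A□`. -/
def dualCone {Y : Type*} (A : Set (Y → ℝ)) : Set (Y → ℝ) :=
  {c | ∀ a ∈ A, ∃ y, a y + c y ≤ 0}

/-- Halfspace DC cones are self-dual: `(p°)□ = p°`. -/
theorem halfspaceCone_self_dual {Y : Type*} (p : Y → ℝ) (hp : p ∈ finPMF Y) :
    dualCone (halfspaceCone p) = halfspaceCone p := by
  obtain ⟨hp0, hpfin, hpsum⟩ := hp
  set S := hpfin.toFinset with hS
  have hsub : Function.support p ⊆ (S : Set Y) := by
    simp [hS]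
  have hpair : ∀ a : Y → ℝ, pairing p a = ∑ y ∈ S, p y * a y := by
    intro a
    apply finsum_eq_finset_sum_of_support_subset
    intro y hy
    have hne : p y ≠ 0 := by
      intro h
      apply hy
      simp [Function.mem_support] at hy ⊢
      simp [h]
    exact hsub hne
  have hSsum : ∑ y ∈ S, p y = 1 := by
    rw [← hpsum]
    exact (finsum_eq_finset_sum_of_support_subset p hsub).symm
  ext c
  constructor
  · intro hc
    -- c ∈ dual; show pairing p c ≤ 0
    set t := pairing p c with ht
    by_contra hpos
    simp only [halfspaceCone, Set.mem_setOf_eq, not_le] at hpos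
    obtain ⟨y, hy⟩ := hc (fun y => t - c y) (by
      show pairing p (fun y => t - c y) ≤ 0
      rw [hpair]
      have : ∑ y ∈ S, p y * (t - c y) = t * (∑ y ∈ S, p y) - ∑ y ∈ S, p y * c y := by
        rw [Finset.mul_sum, ← Finset.sum_sub_distrib]
        apply Finset.sum_congr rfl
        intro y _; ring
      rw [this, hSsum, mul_one, ← hpair, ← ht]
      simp)
    simp only [sub_add_cancel] at hy
    have : t ≤ 0 := by linarith
    exact absurd this (not_le.mpr hpos)
  · intro hc a ha
    simp only [halfspaceCone, Set.mem_setOf_eq] at hc ha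
    by_contra hno
    push_neg at hno
    have hlt : (0:ℝ) < ∑ y ∈ S, p y * (a y + c y) := by
      apply Finset.sum_pos'
      · intro y _
        exact mul_nonneg (hp0 y) (le_of_lt (hno y))
      · have hne : ∃ y ∈ S, p y ≠ 0 := by
          by_contra h
          push_neg at h
          have : ∑ y ∈ S, p y = 0 := Finset.sum_eq_zero fun y hy => h y hy
          rw [hSsum] at this; norm_num at this
        obtain ⟨y, hyS, hyne⟩ := hne
        exact ⟨y, hyS, mul_pos ((hp0 y).lt_of_ne (Ne.symm hyne)) (hno y)⟩
    have hsum : ∑ y ∈ S, p y * (a y + c y) = pairing p a + pairing p c := by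
      rw [hpair a, hpair c, ← Finset.sum_add_distrib]
      apply Finset.sum_congr rfl
      intro y _; ring
    rw [hsum] at hlt
    linarith

end
end
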